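/- In Strings and Coins on the loopy cycle C_(n,1) (a cycle C_n with a single loop attached at one vertex, n ≥ 3), Player 1 wins under optimal play. -/

import Mathlib

/-- A position in Strings and Coins: a finite multigraph, with vertex set `verts`
and a multiset of (possibly loop) edges, each given as an ordered pair. -/
structure SCPos (V : Type) where
  verts : Finset V
  edges : Multiset (V × V)

variable {V : Type} [DecidableEq V]

/-- Number of edges incident to `v` (each edge, including a loop, counted once);
only being zero or nonzero matters for captures. -/
def SCPos.deg (p : SCPos V) (v : V) : ℕ :=
  (p.edges.filter (fun f => f.1 = v ∨ f.2 = v)).card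

/-- Degree of `v`, where a loop at `v` contributes 2. -/
def SCPos.degree (p : SCPos V) (v : V) : ℕ :=
  (p.edges.map (fun e => (if e.1 = v then 1 else 0) + (if e.2 = v then 1 else 0))).sum

/-- The position obtained by removing one copy of edge `e`. -/
def SCPos.remove (p : SCPos V) (e : V × V) : SCPos V :=
  ⟨p.verts, p.edges.erase e⟩

/-- The number of vertices captured by removing edge `e` from `p`:
endpoints of `e` whose degree drops to zero. -/
def SCPos.caps (p : SCPos V) (e : V × V) : ℕ :=
  (p.verts.filter (fun v => (v = e.1 ∨ v = e.2) ∧ (p.remove e).deg v = 0)).card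

/-- Optimal score `(mover's points, opponent's points)` of Strings and Coins,
under play where each player maximizes their own number of captured vertices.
A player who captures at least one vertex moves again. -/
noncomputable def SCPos.score (p : SCPos V) : ℕ × ℕ :=
  if h : p.edges = 0 then (0, 0)
  else
    (p.edges.toList.attach.map (fun ⟨e, he⟩ =>
      let s := (p.remove e).score
      let c := p.caps e
      if c = 0 then (s.2, s.1) else (s.1 + c, s.2))).foldl
      (fun best o => if best.1 ≤ o.1 then o else best) (0, 0)
termination_by p.edges.card
decreasing_by
  exact Multiset.card_erase_lt_of_mem (Multiset.mem_toList.mp he)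

/-- The cycle graph `C_n` as a Strings and Coins position. -/
def cyclePos (n : ℕ) : SCPos ℕ :=
  ⟨Finset.range n, ((List.range n).map (fun i => (i, (i + 1) % n)) : List (ℕ × ℕ))⟩

/-- The friendship graph `F_n`: `n` triangles sharing the common vertex `0`. -/
def friendshipPos (n : ℕ) : SCPos ℕ :=
  ⟨Finset.range (2 * n + 1),
   (((List.range n).flatMap fun i =>
      [(0, 2 * i + 1), (0, 2 * i + 2), (2 * i + 1, 2 * i + 2)]) : List (ℕ × ℕ))⟩

/-- The pinwheel graph `PW_n`: `n` copies of `C_4` sharing the common vertex `0`. -/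
def pinwheelPos (n : ℕ) : SCPos ℕ :=
  ⟨Finset.range (3 * n + 1),
   (((List.range n).flatMap fun i =>
      [(0, 3 * i + 1), (3 * i + 1, 3 * i + 2), (3 * i + 2, 3 * i + 3), (3 * i + 3, 0)]) :
     List (ℕ × ℕ))⟩

/-- The loopy star `L_n`: center `0`, outer vertices `1, …, n`, each joined to the
center by an edge and carrying one loop. -/
def loopyStarPos (n : ℕ) : SCPos ℕ :=
  ⟨Finset.range (n + 1),
   (((List.range n).flatMap fun i => [(0, i + 1), (i + 1, i + 1)]) : List (ℕ × ℕ))⟩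

/-- The double loopy star `L(n,2)`: center `0`, outer vertices `1, …, n`, each joined
to the center by an edge and carrying two loops. -/
def doubleLoopyStarPos (n : ℕ) : SCPos ℕ :=
  ⟨Finset.range (n + 1),
   (((List.range n).flatMap fun i => [(0, i + 1), (i + 1, i + 1), (i + 1, i + 1)]) :
     List (ℕ × ℕ))⟩

/-- The complete bipartite graph `K(1, b)` (a star with `b` leaves). -/
def starPos (b : ℕ) : SCPos ℕ :=
  ⟨Finset.range (b + 1), (((List.range b).map fun i => (0, i + 1)) : List (ℕ × ℕ))⟩

/-- The complete bipartite graph `K(2, b)`: part `{0, 1}` and part `{2, …, b+1}`. -/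
def k2bPos (b : ℕ) : SCPos ℕ :=
  ⟨Finset.range (b + 2),
   (((List.range b).flatMap fun j => [(0, j + 2), (1, j + 2)]) : List (ℕ × ℕ))⟩

/-- The balloon path `BP_n`: a path on vertices `0, …, n-1` with one loop at each vertex. -/
def balloonPathPos (n : ℕ) : SCPos ℕ :=
  ⟨Finset.range n,
   ((((List.range (n - 1)).map fun i => (i, i + 1)) ++
     ((List.range n).map fun i => (i, i))) : List (ℕ × ℕ))⟩

/-- The loopy cycle `C_(n,1)`: the cycle `C_n` with one extra loop at vertex `0`. -/
def loopyCyclePos (n : ℕ) : SCPos ℕ :=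
  ⟨Finset.range n, (0, 0) ::ₘ (cyclePos n).edges⟩

/-- The Strings and Coins position of a finite simple graph: all vertices,
and one (arbitrarily oriented) edge for each edge of the graph. -/
noncomputable def posOfGraph {W : Type} [Fintype W] [DecidableEq W]
    (G : SimpleGraph W) [DecidableRel G.Adj] : SCPos W :=
  ⟨Finset.univ, G.edgeFinset.val.map Quot.out⟩

/-!
Removing the loop of `C_(n,1)` captures nothing and hands the opponent the bare cycle `C_n`.
Every first move on `C_n` captures nothing and leaves a path through all `n` vertices, on which the
player to move takes everything by repeatedly removing an end edge: that captures the end vertex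
and keeps the turn. So the player who must open `C_n` scores nothing, and Player 1, having taken
the loop, collects all `n` vertices. Upper bounds cost nothing, because the two scores always add
up to the number of vertices that still carry an edge.
-/

namespace SCPos

section PickBetter

variable {α β : Type*} [LinearOrder α]

def pickBetter (best o : α × β) : α × β := if best.1 ≤ o.1 then o else best

theorem foldl_pickBetter_mem (l : List (α × β)) (a : α × β) :
    l.foldl pickBetter a ∈ a :: l := by
  induction l generalizing a with
  | nil => simp
  | cons b t ih =>
    rcases List.mem_cons.mp (ih (pickBetter a b)) with h | h
    · rw [List.foldl_cons, h, pickBetter]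
      split_ifs <;> simp
    · exact List.mem_cons_of_mem _ (List.mem_cons_of_mem _ h)

theorem fst_le_foldl_pickBetter (l : List (α × β)) (a : α × β) :
    ∀ o ∈ a :: l, o.1 ≤ (l.foldl pickBetter a).1 := by
  induction l generalizing a with
  | nil => simp
  | cons b t ih =>
    have hab : a.1 ≤ (pickBetter a b).1 ∧ b.1 ≤ (pickBetter a b).1 := by
      unfold pickBetter
      split_ifs with h
      · exact ⟨h, le_rfl⟩
      · exact ⟨le_rfl, (not_le.mp h).le⟩
    have hlast := ih (pickBetter a b) _ List.mem_cons_self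
    intro o ho
    rcases List.mem_cons.mp ho with rfl | ho
    · exact hab.1.trans hlast
    rcases List.mem_cons.mp ho with rfl | ho
    · exact hab.2.trans hlast
    · exact ih _ o (List.mem_cons_of_mem _ ho)

end PickBetter

noncomputable def moveValue (p : SCPos V) (e : V × V) : ℕ × ℕ :=
  let s := (p.remove e).score
  let c := p.caps e
  if c = 0 then (s.2, s.1) else (s.1 + c, s.2)

theorem moveValue_of_caps_eq_zero {p : SCPos V} {e : V × V} (h : p.caps e = 0) :
    p.moveValue e = ((p.remove e).score.2, (p.remove e).score.1) :=
  if_pos h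

theorem moveValue_of_caps_ne_zero {p : SCPos V} {e : V × V} (h : p.caps e ≠ 0) :
    p.moveValue e = ((p.remove e).score.1 + p.caps e, (p.remove e).score.2) :=
  if_neg h

theorem score_of_edges_eq_zero {p : SCPos V} (h : p.edges = 0) : p.score = (0, 0) := by
  rw [score.eq_1, dif_pos h]

theorem score_eq_foldl {p : SCPos V} (h : p.edges ≠ 0) :
    p.score = (p.edges.toList.map p.moveValue).foldl pickBetter (0, 0) := by
  rw [score.eq_1, dif_neg h]
  exact congrArg (List.foldl pickBetter (0, 0)) (List.attach_map_val (f := p.moveValue))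

theorem exists_score_eq_moveValue {p : SCPos V} (h : p.edges ≠ 0) :
    ∃ e ∈ p.edges, p.score = p.moveValue e := by
  obtain ⟨b, t, hbt⟩ := List.exists_cons_of_ne_nil (mt Multiset.toList_eq_nil.mp h)
  have hfirst : pickBetter (0, 0) (p.moveValue b) = p.moveValue b := if_pos (Nat.zero_le _)
  have hmem := foldl_pickBetter_mem (t.map p.moveValue) (p.moveValue b)
  rw [← List.map_cons, ← hbt, List.mem_map] at hmem
  obtain ⟨e, he, hval⟩ := hmem
  refine ⟨e, Multiset.mem_toList.mp he, ?_⟩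
  rw [score_eq_foldl h, hbt, List.map_cons, List.foldl_cons, hfirst, hval]

theorem moveValue_fst_le_score_fst {p : SCPos V} {e : V × V} (he : e ∈ p.edges) :
    (p.moveValue e).1 ≤ p.score.1 := by
  rw [score_eq_foldl fun h => Multiset.notMem_zero e (h ▸ he)]
  exact fst_le_foldl_pickBetter _ _ _ <| List.mem_cons_of_mem _ <|
    List.mem_map_of_mem (Multiset.mem_toList.mpr he)

def liveVerts (p : SCPos V) : Finset V := p.verts.filter fun v => p.deg v ≠ 0

theorem deg_eq_deg_remove_add {p : SCPos V} {e : V × V} (he : e ∈ p.edges) (v : V) :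
    p.deg v = (p.remove e).deg v + if e.1 = v ∨ e.2 = v then 1 else 0 := by
  unfold deg remove
  conv_lhs => rw [← Multiset.cons_erase he]
  rw [Multiset.filter_cons]
  split_ifs <;> simp [Nat.add_comm]

theorem deg_ne_zero_of_mem {p : SCPos V} {f : V × V} (hf : f ∈ p.edges) {v : V}
    (hv : f.1 = v ∨ f.2 = v) : p.deg v ≠ 0 :=
  (Multiset.card_pos_iff_exists_mem.mpr ⟨f, Multiset.mem_filter.mpr ⟨hf, hv⟩⟩).ne'

theorem deg_eq_zero {p : SCPos V} {v : V} (h : ∀ f ∈ p.edges, f.1 ≠ v ∧ f.2 ≠ v) :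
    p.deg v = 0 :=
  Multiset.card_eq_zero.mpr <| Multiset.filter_eq_nil.mpr fun f hf hv =>
    hv.elim (h f hf).1 (h f hf).2

theorem card_liveVerts_remove_add_caps {p : SCPos V} {e : V × V} (he : e ∈ p.edges) :
    (p.remove e).liveVerts.card + p.caps e = p.liveVerts.card := by
  rw [← Finset.card_filter_add_card_filter_not (s := p.liveVerts)
    (fun v : V => (p.remove e).deg v ≠ 0)]
  simp only [liveVerts, caps, Finset.filter_filter]
  congr 2 <;> refine Finset.filter_congr fun v _ => ?_ <;> have hv := deg_eq_deg_remove_add he v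
  · exact ⟨fun h => ⟨by omega, h⟩, And.right⟩
  · rw [eq_comm (a := v), eq_comm (a := v)]
    split_ifs at hv with hvE <;> simp only [hvE, true_and, false_and, false_iff] <;> omega

theorem moveValue_fst_add_snd_of_score {p : SCPos V} {e : V × V} (he : e ∈ p.edges)
    (h : (p.remove e).score.1 + (p.remove e).score.2 = (p.remove e).liveVerts.card) :
    (p.moveValue e).1 + (p.moveValue e).2 = p.liveVerts.card := by
  have hcaps := card_liveVerts_remove_add_caps he
  by_cases hc : p.caps e = 0
  · rw [moveValue_of_caps_eq_zero hc]; omega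
  · rw [moveValue_of_caps_ne_zero hc]; omega

theorem score_fst_add_score_snd (p : SCPos V) : p.score.1 + p.score.2 = p.liveVerts.card := by
  by_cases h : p.edges = 0
  · have hdead : p.liveVerts = ∅ :=
      Finset.filter_false_of_mem fun v _ => by simp [deg, h]
    simp [score_of_edges_eq_zero h, hdead]
  · obtain ⟨e, he, hs⟩ := exists_score_eq_moveValue h
    rw [hs]
    exact moveValue_fst_add_snd_of_score he (score_fst_add_score_snd (p.remove e))
termination_by p.edges.card
decreasing_by exact Multiset.card_erase_lt_of_mem he

theorem moveValue_fst_add_snd {p : SCPos V} {e : V × V} (he : e ∈ p.edges) :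
    (p.moveValue e).1 + (p.moveValue e).2 = p.liveVerts.card :=
  moveValue_fst_add_snd_of_score he (score_fst_add_score_snd _)

theorem score_eq_moveValue_of_snd_eq_zero {p : SCPos V} {e : V × V} (he : e ∈ p.edges)
    (h : (p.moveValue e).2 = 0) : p.score = p.moveValue e := by
  have hle := moveValue_fst_le_score_fst he
  have hmove := moveValue_fst_add_snd he
  have hscore := score_fst_add_score_snd p
  ext <;> omega

def walkPos {W : Type} (s : Finset W) (w : ℕ → W) (m : ℕ) : SCPos W :=
  ⟨s, (Multiset.range m).map fun j => (w j, w (j + 1))⟩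

theorem mem_walkPos_edges_iff {W : Type} {s : Finset W} {w : ℕ → W} {m : ℕ} {f : W × W} :
    f ∈ (walkPos s w m).edges ↔ ∃ j < m, (w j, w (j + 1)) = f := by
  simp [walkPos]

theorem mem_walkPos_edges {W : Type} {s : Finset W} {w : ℕ → W} {m j : ℕ} (hj : j < m) :
    (w j, w (j + 1)) ∈ (walkPos s w m).edges :=
  mem_walkPos_edges_iff.mpr ⟨j, hj, rfl⟩

theorem walkPos_succ_edges {W : Type} (s : Finset W) (w : ℕ → W) (m : ℕ) :
    (walkPos s w (m + 1)).edges = (w 0, w 1) ::ₘ (walkPos s (fun j => w (j + 1)) m).edges := by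
  simp only [walkPos, ← Multiset.coe_range, List.range_succ_eq_map, Multiset.map_coe,
    List.map_cons, List.map_map, Multiset.cons_coe]
  rfl

theorem walkPos_remove (s : Finset V) (w : ℕ → V) (m : ℕ) :
    (walkPos s w (m + 1)).remove (w 0, w 1) = walkPos s (fun j => w (j + 1)) m := by
  rw [remove, walkPos_succ_edges, Multiset.erase_cons_head]
  rfl

theorem walkPos_score_snd {s : Finset V} {w : ℕ → V} {m : ℕ} (hw : Set.InjOn w (Set.Iic m))
    (hs : ∀ j < m, w j ∈ s) : (walkPos s w m).score.2 = 0 := by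
  induction m generalizing w with
  | zero => rw [score_of_edges_eq_zero rfl]
  | succ m ih =>
    have hw' : Set.InjOn (fun j => w (j + 1)) (Set.Iic m) := fun a ha b hb hab =>
      Nat.succ_injective (hw (Nat.succ_le_succ ha) (Nat.succ_le_succ hb) hab)
    have hrest := ih hw' fun j hj => hs (j + 1) (by omega)
    have hstart : (walkPos s (fun j => w (j + 1)) m).deg (w 0) = 0 := by
      refine deg_eq_zero fun f hf => ?_
      obtain ⟨j, hj, rfl⟩ := mem_walkPos_edges_iff.mp hf
      have hfresh (k : ℕ) (hk : k ≤ m + 1) (h : w k = w 0) : k = 0 := hw hk (Nat.zero_le _) h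
      exact ⟨fun h => (nomatch hfresh (j + 1) (by omega) h),
        fun h => (nomatch hfresh (j + 2) (by omega) h)⟩
    have hcaps : (walkPos s w (m + 1)).caps (w 0, w 1) ≠ 0 :=
      Finset.card_ne_zero_of_mem <| Finset.mem_filter.mpr
        ⟨hs 0 m.succ_pos, Or.inl rfl, by rwa [walkPos_remove]⟩
    have hmove : ((walkPos s w (m + 1)).moveValue (w 0, w 1)).2 = 0 := by
      rw [moveValue_of_caps_ne_zero hcaps, walkPos_remove, hrest]
    rwa [score_eq_moveValue_of_snd_eq_zero (mem_walkPos_edges m.succ_pos) hmove]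

theorem caps_eq_zero {p : SCPos V} {e : V × V} (h₁ : (p.remove e).deg e.1 ≠ 0)
    (h₂ : (p.remove e).deg e.2 ≠ 0) : p.caps e = 0 :=
  Finset.card_eq_zero.mpr <| Finset.filter_eq_empty_iff.mpr fun _ _ ⟨hv, h₀⟩ => by
    rcases hv with rfl | rfl <;> contradiction

end SCPos

open SCPos

theorem add_mod_injOn (a n : ℕ) : Set.InjOn (fun j => (a + j) % n) (Set.Iio n) :=
  fun s hs t ht h => by
    have h' := Nat.ModEq.add_left_cancel' a h
    rwa [Nat.ModEq, Nat.mod_eq_of_lt hs, Nat.mod_eq_of_lt ht] at h'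

theorem map_add_mod_range (a n : ℕ) :
    (Multiset.range n).map (fun j => (a + j) % n) = Multiset.range n := by
  have hinj : Set.InjOn (fun j => (a + j) % n) ↑(Finset.range n) := by
    rw [Finset.coe_range]
    exact add_mod_injOn a n
  rw [← Finset.range_val, ← Finset.image_val_of_injOn hinj]
  congr 1
  refine Finset.eq_of_subset_of_card_le (fun v hv => ?_) (Finset.card_image_of_injOn hinj).ge
  obtain ⟨j, hj, rfl⟩ := Finset.mem_image.mp hv
  exact Finset.mem_range.mpr (Nat.mod_lt _ ((Nat.zero_le j).trans_lt (Finset.mem_range.mp hj)))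

theorem cyclePos_edges (n : ℕ) :
    (cyclePos n).edges = (Multiset.range n).map fun v => (v, (v + 1) % n) := by
  rw [cyclePos, ← Multiset.coe_range, Multiset.map_coe]

theorem mem_cyclePos_edges {n : ℕ} {f : ℕ × ℕ} :
    f ∈ (cyclePos n).edges ↔ ∃ i < n, (i, (i + 1) % n) = f := by
  simp [cyclePos_edges]

theorem cyclePos_remove {n i : ℕ} (hi : i < n) :
    (cyclePos n).remove (i, (i + 1) % n) =
      walkPos (Finset.range n) (fun j => (i + 1 + j) % n) (n - 1) := by
  set w : ℕ → ℕ := fun j => (i + 1 + j) % n with hw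
  have hstep (j : ℕ) : w (j + 1) = (w j + 1) % n := by
    simp only [hw, Nat.mod_add_mod, Nat.add_assoc]
  have hlast : w (n - 1) = i := by
    simp only [hw, show i + 1 + (n - 1) = i + n by omega, Nat.add_mod_right, Nat.mod_eq_of_lt hi]
  suffices (cyclePos n).edges = (i, (i + 1) % n) ::ₘ (walkPos (Finset.range n) w (n - 1)).edges by
    rw [remove, this, Multiset.erase_cons_head]
    rfl
  calc (cyclePos n).edges = ((Multiset.range (n - 1 + 1)).map w).map fun v => (v, (v + 1) % n) := by
        rw [Nat.sub_add_cancel (by omega), map_add_mod_range, cyclePos_edges]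
    _ = _ := by
      rw [Multiset.range_succ, Multiset.map_cons, Multiset.map_cons, hlast, Multiset.map_map]
      simp only [walkPos, hstep, Function.comp_def]

theorem cyclePos_deg_ne_zero {n v : ℕ} (hv : v < n) : (cyclePos n).deg v ≠ 0 :=
  deg_ne_zero_of_mem (mem_cyclePos_edges.mpr ⟨v, hv, rfl⟩) (Or.inl rfl)

theorem cyclePos_liveVerts (n : ℕ) : (cyclePos n).liveVerts = Finset.range n :=
  Finset.filter_true_of_mem fun _ hv => cyclePos_deg_ne_zero (Finset.mem_range.mp hv)

theorem cyclePos_caps {n i : ℕ} (hn : 2 ≤ n) (hi : i < n) :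
    (cyclePos n).caps (i, (i + 1) % n) = 0 := by
  refine caps_eq_zero ?_ ?_ <;> rw [cyclePos_remove hi]
  · refine deg_ne_zero_of_mem (mem_walkPos_edges (j := n - 2) (by omega)) (Or.inr ?_)
    simp only [show i + 1 + (n - 2 + 1) = i + n by omega, Nat.add_mod_right, Nat.mod_eq_of_lt hi]
  · exact deg_ne_zero_of_mem (mem_walkPos_edges (j := 0) (by omega)) (Or.inl rfl)

theorem cyclePos_score {n : ℕ} (hn : 2 ≤ n) : (cyclePos n).score = (0, n) := by
  have h₀ : (0, 1 % n) ∈ (cyclePos n).edges := mem_cyclePos_edges.mpr ⟨0, by omega, rfl⟩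
  obtain ⟨e, he, hs⟩ := exists_score_eq_moveValue fun h => Multiset.notMem_zero _ (h ▸ h₀)
  obtain ⟨i, hi, rfl⟩ := mem_cyclePos_edges.mp he
  have hfst : (cyclePos n).score.1 = 0 := by
    rw [hs, moveValue_of_caps_eq_zero (cyclePos_caps hn hi), cyclePos_remove hi]
    have hsub : Set.Iic (n - 1) ⊆ Set.Iio n := Set.Iic_subset_Iio.mpr (by omega)
    exact walkPos_score_snd ((add_mod_injOn _ n).mono hsub)
      fun j _ => Finset.mem_range.mpr (Nat.mod_lt _ (by omega))
  have hsum := score_fst_add_score_snd (cyclePos n)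
  rw [cyclePos_liveVerts, Finset.card_range] at hsum
  ext <;> simp only <;> omega

theorem loopyCyclePos_remove_loop (n : ℕ) : (loopyCyclePos n).remove (0, 0) = cyclePos n := by
  rw [remove, loopyCyclePos, Multiset.erase_cons_head]
  rfl

/-- On the loopy cycle `C_(n,1)` (`n ≥ 3`), a cycle with a single loop attached at
one vertex, Player 1 wins under optimal play. -/
theorem stmt19 (n : ℕ) (hn : 3 ≤ n) :
    ((loopyCyclePos n).score).2 < ((loopyCyclePos n).score).1 := by
  have hloop : ((0 : ℕ), (0 : ℕ)) ∈ (loopyCyclePos n).edges :=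
    Multiset.mem_cons_self (0, 0) (cyclePos n).edges
  have hdeg : (cyclePos n).deg 0 ≠ 0 := cyclePos_deg_ne_zero (by omega)
  have hcaps : (loopyCyclePos n).caps (0, 0) = 0 := by
    apply caps_eq_zero <;> rwa [loopyCyclePos_remove_loop]
  have hmove : (loopyCyclePos n).moveValue (0, 0) = (n, 0) := by
    rw [moveValue_of_caps_eq_zero hcaps, loopyCyclePos_remove_loop, cyclePos_score (by omega)]
  rw [score_eq_moveValue_of_snd_eq_zero hloop (by rw [hmove]), hmove]
  omega
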